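/- arXiv:math/0512530 — 2 statements merged into one kernel-verified Lean document; each statement's English description precedes it below -/
import Mathlib

section
/- Given the relations η² = 0, αη = 0, ημ^{g-1} = n(g-1)!, and the constraint that (μ + Nα + N²η)^g integrates to zero for all integers N, the top intersection numbers α^k μ^{g-k} are forced to be: α²μ^{g-2} = -2n(g-2)!, and α^k μ^{g-k} = 0 for all k ≠ 2 with 1 ≤ k ≤ g. -/
/-!
Modulo the ideal `(η², αη)` the binomial expansion of `μ_N ^ g` collapses to
`(μ + Nα) ^ g + g N² η μ^{g-1}`, so the vanishing of `∫ μ_N ^ g` says that the polynomial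
`∑ₖ C(g,k) ∫(αᵏ μ^{g-k}) Xᵏ + g n (g-1)! X²` has every integer as a root. All its
coefficients therefore vanish; for `k = 2` this reads `C(g,2) ∫(α² μ^{g-2}) = -n g!`.
-/

open MvPolynomial

noncomputable def mu : MvPolynomial (Fin 3) ℚ := X 0
noncomputable def al : MvPolynomial (Fin 3) ℚ := X 1
noncomputable def et : MvPolynomial (Fin 3) ℚ := X 2

open scoped Nat

theorem add_pow_of_sq_eq_zero {R : Type*} [CommRing R] {a e : R} (he : e ^ 2 = 0) (n : ℕ) :
    (a + e) ^ n = a ^ n + n * a ^ (n - 1) * e := by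
  simpa [Polynomial.derivative_X_pow] using
    Polynomial.eval_add_of_sq_eq_zero (Polynomial.X ^ n) a e he

theorem pow_mul_eq_pow_mul_of_mul_eq {M : Type*} [CommMonoid M] {a b e : M} (h : a * e = b * e)
    (n : ℕ) : a ^ n * e = b ^ n * e := by
  induction n with
  | zero => simp
  | succ n ih => rw [pow_succ, mul_assoc, h, mul_left_comm, ih, ← mul_assoc, ← pow_succ']

theorem LinearMap.map_eq_of_mk_span_pair_eq {K A M : Type*} [Semiring K] [CommRing A] [Module K A]
    [AddCommGroup M] [Module K M] (I : A →ₗ[K] M) {a b : A} (ha : ∀ p, I (a * p) = 0)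
    (hb : ∀ p, I (b * p) = 0) {x y : A}
    (h : Ideal.Quotient.mk (Ideal.span {a, b}) x = Ideal.Quotient.mk (Ideal.span {a, b}) y) :
    I x = I y := by
  obtain ⟨c, d, hcd⟩ := Ideal.mem_span_pair.mp (Ideal.Quotient.eq.mp h)
  rw [← sub_eq_zero, ← map_sub, ← hcd, map_add, mul_comm c, mul_comm d, ha, hb, add_zero]

noncomputable def muN (t : ℚ) : MvPolynomial (Fin 3) ℚ := mu + C t * al + C (t ^ 2) * et

theorem map_muN_pow (I : MvPolynomial (Fin 3) ℚ →ₗ[ℚ] ℚ)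
    (hrel_eta : ∀ p, I (et ^ 2 * p) = 0) (hrel_aleta : ∀ p, I (al * et * p) = 0) (g : ℕ) (t : ℚ) :
    I (muN t ^ g) =
      ∑ k ∈ Finset.range (g + 1), g.choose k * I (al ^ k * mu ^ (g - k)) * t ^ k
        + g * I (et * mu ^ (g - 1)) * t ^ 2 := by
  set π := Ideal.Quotient.mk (Ideal.span {et ^ 2, al * et})
  set a := mu + C t * al
  set e := C (t ^ 2) * et
  have he : π e ^ 2 = 0 := by
    rw [← map_pow, Ideal.Quotient.eq_zero_iff_mem, mul_pow]
    exact Ideal.mul_mem_left _ _ (Ideal.subset_span (by simp))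
  have hae : π a * π e = π mu * π e := by
    rw [← map_mul, ← map_mul, ← sub_eq_zero, ← map_sub, Ideal.Quotient.eq_zero_iff_mem]
    exact Ideal.mem_span_pair.mpr ⟨0, C t * C (t ^ 2), by ring⟩
  have hmod : π (muN t ^ g) = π (a ^ g + g * mu ^ (g - 1) * e) := by
    rw [show muN t = a + e from rfl]
    simp only [map_pow, map_add (f := π) a e, map_add (f := π) (a ^ g), map_mul, map_natCast]
    rw [add_pow_of_sq_eq_zero he, mul_assoc, mul_assoc, pow_mul_eq_pow_mul_of_mul_eq hae]
  have hI : ∀ r p, I (C r * p) = r * I p := fun r p => by rw [C_mul', map_smul, smul_eq_mul]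
  rw [I.map_eq_of_mk_span_pair_eq hrel_eta hrel_aleta hmod, map_add]
  congr 1
  · rw [show a = C t * al + mu from add_comm _ _, add_pow, map_sum]
    refine Finset.sum_congr rfl fun k _ => ?_
    rw [show (C t * al) ^ k * mu ^ (g - k) * (g.choose k : MvPolynomial (Fin 3) ℚ) =
        C (g.choose k * t ^ k) * (al ^ k * mu ^ (g - k)) by
      simp only [map_mul, map_pow, map_natCast]; ring, hI]
    ring
  · rw [show (g : MvPolynomial (Fin 3) ℚ) * mu ^ (g - 1) * e =
        C (g * t ^ 2) * (et * mu ^ (g - 1)) by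
      simp only [e, map_mul, map_pow, map_natCast]; ring, hI]
    ring

theorem eq_zero_of_forall_int_sum_mul_pow_eq_zero {K : Type*} [Field K] [CharZero K] {c : ℕ → K}
    {d : ℕ} (h : ∀ N : ℤ, ∑ k ∈ Finset.range d, c k * (N : K) ^ k = 0) :
    ∀ k < d, c k = 0 := by
  intro k hk
  set p : Polynomial K := ∑ i ∈ Finset.range d, Polynomial.C (c i) * Polynomial.X ^ i
  have hp : p = 0 := by
    refine p.eq_zero_of_infinite_isRoot
      ((Set.infinite_range_of_injective Int.cast_injective).mono ?_)
    rintro _ ⟨N, rfl⟩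
    simpa [p, Polynomial.eval_finsetSum] using h N
  simpa [p, Polynomial.finsetSum_coeff, Polynomial.coeff_C_mul_X_pow, hk] using
    congrArg (·.coeff k) hp

theorem Nat.choose_two_mul_two_mul_factorial {g : ℕ} (hg : 2 ≤ g) :
    g.choose 2 * (2 * (g - 2)!) = g * (g - 1)! := by
  rw [Nat.mul_factorial_pred (by omega), ← Nat.choose_mul_factorial_mul_factorial hg, mul_assoc]
  rfl

theorem stmt_1_general (g n : ℕ) (hg : 2 ≤ g)
    (I : MvPolynomial (Fin 3) ℚ →ₗ[ℚ] ℚ)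
    (hrel_eta : ∀ p, I (et ^ 2 * p) = 0)
    (hrel_aleta : ∀ p, I (al * et * p) = 0)
    (h_eta_mu : I (et * mu ^ (g - 1)) = n * Nat.factorial (g - 1))
    (h_vanish : ∀ N : ℤ, I ((mu + C (N : ℚ) * al + C ((N : ℚ) ^ 2) * et) ^ g) = 0) :
    I (al ^ 2 * mu ^ (g - 2)) = -2 * n * Nat.factorial (g - 2) ∧
      ∀ k : ℕ, 1 ≤ k → k ≤ g → k ≠ 2 → I (al ^ k * mu ^ (g - k)) = 0 := by
  have hcoeff := eq_zero_of_forall_int_sum_mul_pow_eq_zero (d := g + 1)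
    (c := fun k => (g.choose k : ℚ) * I (al ^ k * mu ^ (g - k)) +
      if k = 2 then (g : ℚ) * (n * (g - 1)!) else 0) fun N => by
    refine Eq.trans ?_ (h_vanish N)
    rw [← muN, map_muN_pow I hrel_eta hrel_aleta, h_eta_mu]
    simp only [add_mul, Finset.sum_add_distrib, ite_mul, zero_mul, Finset.sum_ite_eq',
      Finset.mem_range, if_pos (show 2 < g + 1 by omega)]
  have hchoose : ∀ k ≤ g, (g.choose k : ℚ) ≠ 0 := fun k hk => by
    exact_mod_cast (Nat.choose_pos hk).ne'
  constructor
  · have h2 := hcoeff 2 (by omega)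
    beta_reduce at h2
    rw [if_pos rfl] at h2
    have hfact : (g.choose 2 : ℚ) * (2 * (g - 2)!) = g * (g - 1)! := by
      exact_mod_cast Nat.choose_two_mul_two_mul_factorial hg
    refine mul_left_cancel₀ (hchoose 2 hg) ?_
    linear_combination h2 + n * hfact
  · intro k _ hkg hk2
    have hk := hcoeff k (by omega)
    beta_reduce at hk
    rw [if_neg hk2, add_zero] at hk
    exact (mul_eq_zero.mp hk).resolve_left (hchoose k hkg)

/-- Given η² = 0, αη = 0 (under the integration), ∫(ημ^{g-1}) = n(g-1)!, and
∫((μ + Nα + N²η)^g) = 0 for all integers N, the top intersection numbers are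
forced: ∫(α²μ^{g-2}) = -2n(g-2)! and ∫(α^kμ^{g-k}) = 0 for 1 ≤ k ≤ g, k ≠ 2. -/
theorem stmt_1 (g n : ℕ) (hg : 2 ≤ g) (hn : 0 < n)
    (I : MvPolynomial (Fin 3) ℚ →ₗ[ℚ] ℚ)
    (hrel_eta : ∀ p, I (et ^ 2 * p) = 0)
    (hrel_aleta : ∀ p, I (al * et * p) = 0)
    (h_eta_mu : I (et * mu ^ (g - 1)) = n * Nat.factorial (g - 1))
    (h_vanish : ∀ N : ℤ, I ((mu + C (N : ℚ) * al + C ((N : ℚ) ^ 2) * et) ^ g) = 0) :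
    I (al ^ 2 * mu ^ (g - 2)) = -2 * n * Nat.factorial (g - 2) ∧
      ∀ k : ℕ, 1 ≤ k → k ≤ g → k ≠ 2 → I (al ^ k * mu ^ (g - k)) = 0 :=
  stmt_1_general g n hg I hrel_eta hrel_aleta h_eta_mu h_vanish
end

section
/- In the model ring of the Poincaré bundle with relations ξ² = -αξ, η² = 0, αη = 0 and integration ημ^{g-1} = n(g-1)!, α²μ^{g-2} = -2n(g-2)!, α^kμ^{g-k} = 0 (k≠2), the condition ∫((μ - α/2 + c_η·η)^g) = 0 forces c_η = 1/4. -/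
/-!
Write the class as `x + c η` with `x = μ - α/2`. Since `η² = 0`, only the first two terms of the
binomial expansion of `(x + c η)^g` survive integration, and since `αη = 0`,
`∫ x^(g-1) η = ∫ μ^(g-1) η = n (g-1)!`. In `∫ x^g` only the `α²` term survives, contributing
`C(g,2) · ¼ · (-2n (g-2)!) = -n g!/4`. Hence the integral is `n g! (c - 1/4)`.
-/

open MvPolynomial

section

variable {A M F : Type*}

theorem exists_add_pow_succ_eq_add_mul_add_sq_mul [CommSemiring A] (x e : A) (m : ℕ) :
    ∃ q : A, (x + e) ^ (m + 1) = x ^ (m + 1) + (m + 1) * x ^ m * e + e ^ 2 * q := by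
  induction m with
  | zero => exact ⟨0, by simp⟩
  | succ m ih =>
    obtain ⟨q, hq⟩ := ih
    refine ⟨(m + 1) * x ^ m + q * (x + e), ?_⟩
    rw [pow_succ, hq]
    push_cast
    ring

theorem map_add_pow_succ_of_map_sq_mul_eq_zero [CommSemiring A] [AddCommMonoid M]
    [FunLike F A M] [AddMonoidHomClass F A M] (I : F) {x e : A} (he : ∀ p, I (e ^ 2 * p) = 0)
    (m : ℕ) :
    I ((x + e) ^ (m + 1)) = I (x ^ (m + 1)) + (m + 1) • I (x ^ m * e) := by
  obtain ⟨q, hq⟩ := exists_add_pow_succ_eq_add_mul_add_sq_mul x e m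
  rw [hq, map_add, map_add, he, add_zero, mul_assoc, ← Nat.cast_succ, ← nsmul_eq_mul, map_nsmul]

theorem map_add_pow_mul_of_map_mul_mul_eq_zero [CommRing A] [AddCommMonoid M]
    [FunLike F A M] [AddMonoidHomClass F A M] (I : F) {x y e : A}
    (hy : ∀ p, I (y * e * p) = 0) (m : ℕ) :
    I ((x + y) ^ m * e) = I (x ^ m * e) := by
  obtain ⟨q, hq⟩ : y ∣ (x + y) ^ m - x ^ m := by
    simpa using sub_dvd_pow_sub_pow (x + y) x m
  rw [show (x + y) ^ m * e = x ^ m * e + y * e * q by linear_combination e * hq,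
    map_add, hy, add_zero]

theorem map_add_smul_pow_of_map_pow_mul_pow_eq_zero {R : Type*} [CommSemiring R] [CommSemiring A]
    [Algebra R A] [AddCommMonoid M] [Module R M] (I : A →ₗ[R] M) {x y : A} (a : R) {g j : ℕ}
    (hj : j ≤ g) (hy : ∀ k ≤ g, k ≠ j → I (y ^ k * x ^ (g - k)) = 0) :
    I ((x + a • y) ^ g) = (g.choose j * a ^ j) • I (y ^ j * x ^ (g - j)) := by
  have hterm : ∀ k, (a • y) ^ k * x ^ (g - k) * (g.choose k : A)
      = ((g.choose k : R) * a ^ k) • (y ^ k * x ^ (g - k)) := fun k => by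
    simp only [Algebra.smul_def, map_mul, map_pow, map_natCast]
    ring
  rw [add_comm, add_pow, map_sum, Finset.sum_eq_single_of_mem j (Finset.mem_range_succ_iff.2 hj)]
  · rw [hterm, map_smul]
  · intro k hk hkj
    rw [hterm, map_smul, hy k (Finset.mem_range_succ_iff.1 hk) hkj, smul_zero]

end

/-- With the relations η² = 0, αη = 0 and the integration rules
∫(ημ^{g-1}) = n(g-1)!, ∫(α²μ^{g-2}) = -2n(g-2)!, ∫(α^kμ^{g-k}) = 0 for k ≠ 2,
the vanishing ∫((μ - α/2 + c_η·η)^g) = 0 forces c_η = 1/4. -/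
theorem stmt_7 (g n : ℕ) (hg : 2 ≤ g) (hn : 0 < n)
    (I : MvPolynomial (Fin 3) ℚ →ₗ[ℚ] ℚ)
    (hrel_eta : ∀ p, I (et ^ 2 * p) = 0)
    (hrel_aleta : ∀ p, I (al * et * p) = 0)
    (h_eta_mu : I (et * mu ^ (g - 1)) = n * Nat.factorial (g - 1))
    (h_al2 : I (al ^ 2 * mu ^ (g - 2)) = -2 * n * Nat.factorial (g - 2))
    (h_alk : ∀ k : ℕ, k ≤ g → k ≠ 2 → I (al ^ k * mu ^ (g - k)) = 0)
    (ceta : ℚ)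
    (h_vanish : I ((mu - C (1 / 2 : ℚ) * al + C ceta * et) ^ g) = 0) :
    ceta = 1 / 4 := by
  set x := mu + (-1 / 2 : ℚ) • al
  have hx : I (x ^ g) = -(n * g.factorial) / 4 := by
    rw [map_add_smul_pow_of_map_pow_mul_pow_eq_zero I _ hg h_alk, h_al2, smul_eq_mul,
      ← Nat.choose_mul_factorial_mul_factorial hg, Nat.factorial_two]
    push_cast
    ring
  have hxe : I (x ^ (g - 1) * et) = n * (g - 1).factorial := by
    rw [map_add_pow_mul_of_map_mul_mul_eq_zero I (y := (-1 / 2 : ℚ) • al)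
      (fun p => by rw [smul_mul_assoc, smul_mul_assoc, map_smul, hrel_aleta, smul_zero]),
      mul_comm, h_eta_mu]
  have hexpand : mu - C (1 / 2 : ℚ) * al + C ceta * et = x + ceta • et := by
    simp only [x, smul_eq_C_mul, neg_div, map_neg]
    ring
  rw [hexpand, ← Nat.sub_add_cancel (one_le_two.trans hg),
    map_add_pow_succ_of_map_sq_mul_eq_zero I
      (fun p => by rw [smul_pow, smul_mul_assoc, map_smul, hrel_eta, smul_zero]),
    Nat.sub_add_cancel (one_le_two.trans hg)] at h_vanish
  simp only [mul_smul_comm, map_smul, hx, hxe, nsmul_eq_mul, smul_eq_mul] at h_vanish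
  have hfac : (g : ℚ) * (g - 1).factorial = g.factorial := by
    exact_mod_cast Nat.mul_factorial_pred (by omega : g ≠ 0)
  have hpos : (n : ℚ) * g.factorial ≠ 0 := by positivity
  have hkey : (ceta - 1 / 4) * (n * g.factorial) = 0 := by
    linear_combination h_vanish - ceta * n * hfac
  exact sub_eq_zero.1 ((mul_eq_zero.1 hkey).resolve_right hpos)
end
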